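/- For all α > 0, r > 0 and all x, y ∈ ℝ^d: |1(‖x−y‖_p ≤ r) · g(‖x−y‖_p/r) − s(α(r² − ‖x−y‖_p²)) · g*(‖x−y‖_p/r)| ≤ (sup_{t ≥ 0} g*(t)) / (1 + exp(α |r² − ‖x−y‖_p²|)). -/

import Mathlib

open MeasureTheory ProbabilityTheory Filter
open scoped ENNReal NNReal BigOperators

/-- The ℓ^p norm on `ℝ^d`, for `p ∈ [1,∞]` (encoded as `p : ℝ≥0∞`). -/
noncomputable def lpNormR {d : ℕ} (p : ℝ≥0∞) (x : Fin d → ℝ) : ℝ :=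
  if p = ∞ then ⨆ i, |x i| else (∑ i, |x i| ^ p.toReal) ^ (1 / p.toReal)

/-- The Gaussian weight `ρ(x) = exp(-∑ x_i²/(2σ_i²))`. -/
noncomputable def gaussWeight {d : ℕ} (σ : Fin d → ℝ) (x : Fin d → ℝ) : ℝ :=
  Real.exp (-(∑ i, x i ^ 2 / (2 * σ i ^ 2)))

/-- The product Gaussian measure `N_d(0, diag(σ_1²,…,σ_d²))` on `ℝ^d`. -/
noncomputable def gaussPi (d : ℕ) (σ : Fin d → ℝ) : Measure (Fin d → ℝ) :=
  Measure.pi fun i => gaussianReal 0 (Real.toNNReal (σ i ^ 2))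

/-- The moment constant `m_l = ∫_{ℝ^d} |u_1|^l 1(‖u‖_p ≤ 1) g(‖u‖_p) du`. -/
noncomputable def mmt (d : ℕ) (hd : 0 < d) (p : ℝ≥0∞) (g : ℝ → ℝ) (l : ℕ) : ℝ :=
  ∫ u : Fin d → ℝ,
    if lpNormR p u ≤ 1 then |u ⟨0, hd⟩| ^ l * g (lpNormR p u) else 0

/-- The affinity matrix `K(i,j) = 1(‖x_i-x_j‖_p ≤ r) g(‖x_i-x_j‖_p/r)`. -/
noncomputable def affK {d n : ℕ} (p : ℝ≥0∞) (g : ℝ → ℝ) (r : ℝ)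
    (x : Fin n → Fin d → ℝ) : Matrix (Fin n) (Fin n) ℝ :=
  Matrix.of fun i j =>
    if lpNormR p (x i - x j) ≤ r then g (lpNormR p (x i - x j) / r) else 0

/-- The scaled random-walk Laplacian `L = (2m_0/(m_2 r²)) (I - D⁻¹K)`. -/
noncomputable def lapL {d n : ℕ} (hd : 0 < d) (p : ℝ≥0∞) (g : ℝ → ℝ) (r : ℝ)
    (x : Fin n → Fin d → ℝ) : Matrix (Fin n) (Fin n) ℝ :=
  (2 * mmt d hd p g 0 / (mmt d hd p g 2 * r ^ 2)) •
    (1 - Matrix.of fun i j => affK p g r x i j / ∑ l, affK p g r x i l)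

/-- The eigenvalues of a matrix (real roots of the characteristic polynomial,
with multiplicity), sorted in non-decreasing order. -/
noncomputable def sortedEigs {n : ℕ} (A : Matrix (Fin n) (Fin n) ℝ) : List ℝ :=
  Multiset.sort (Matrix.charpoly A).roots (· ≤ ·)

/-- The number of eigenvalues (real roots of the characteristic polynomial, with
multiplicity) that are `≤ δ`. -/
noncomputable def eigCountLE {n : ℕ} (A : Matrix (Fin n) (Fin n) ℝ) (δ : ℝ) : ℕ :=
  Multiset.card (Multiset.filter (fun t => t ≤ δ) (Matrix.charpoly A).roots)

/-- The `m`-th physicist's Hermite polynomial `H_m(x) = (-1)^m e^{x²} (d/dx)^m e^{-x²}`. -/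
noncomputable def physHermite (m : ℕ) (x : ℝ) : ℝ :=
  (-1 : ℝ) ^ m * Real.exp (x ^ 2) * iteratedDeriv m (fun t => Real.exp (-t ^ 2)) x

/-- The sigmoid function `s(t) = (1+e^{-t})⁻¹`. -/
noncomputable def sigmoid (t : ℝ) : ℝ := (1 + Real.exp (-t))⁻¹

/-- The smoothed affinity matrix `K̃(i,j) = s(α(r²-‖x_i-x_j‖_p²)) g*(‖x_i-x_j‖_p/r)`. -/
noncomputable def affKs {d n : ℕ} (p : ℝ≥0∞) (gs : ℝ → ℝ) (α r : ℝ)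
    (x : Fin n → Fin d → ℝ) : Matrix (Fin n) (Fin n) ℝ :=
  Matrix.of fun i j =>
    sigmoid (α * (r ^ 2 - lpNormR p (x i - x j) ^ 2)) * gs (lpNormR p (x i - x j) / r)

/-- The smoothed scaled random-walk Laplacian `L̃ = (2m_0/(m_2 r²)) (I - D̃⁻¹K̃)`. -/
noncomputable def lapLs {d n : ℕ} (hd : 0 < d) (p : ℝ≥0∞) (g gs : ℝ → ℝ) (α r : ℝ)
    (x : Fin n → Fin d → ℝ) : Matrix (Fin n) (Fin n) ℝ :=
  (2 * mmt d hd p g 0 / (mmt d hd p g 2 * r ^ 2)) •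
    (1 - Matrix.of fun i j => affKs p gs α r x i j / ∑ l, affKs p gs α r x i l)

/-- The ℓ²→ℓ² operator norm of a real square matrix. -/
noncomputable def matOpNorm {n : ℕ} (A : Matrix (Fin n) (Fin n) ℝ) : ℝ :=
  ‖Matrix.toEuclideanCLM (𝕜 := ℝ) A‖

/-- The weighted L² norm `‖f‖_F = (∫ f(x)² ρ(x)² dx)^{1/2}`. -/
noncomputable def Fnorm {d : ℕ} (σ : Fin d → ℝ) (f : (Fin d → ℝ) → ℝ) : ℝ :=
  (∫ x : Fin d → ℝ, f x ^ 2 * gaussWeight σ x ^ 2) ^ ((1 : ℝ) / 2)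

/-- Partial derivative `∂f/∂x_i`. -/
noncomputable def pd {d : ℕ} (i : Fin d) (f : (Fin d → ℝ) → ℝ) : (Fin d → ℝ) → ℝ :=
  fun x => fderiv ℝ f x (Pi.single i 1)

/-- The weighted Laplace–Beltrami operator
`Δ_ρ f(x) = -∑ ∂²f/∂x_i²(x) + ∑ (2x_i/σ_i²) ∂f/∂x_i(x)`. -/
noncomputable def deltaRho {d : ℕ} (σ : Fin d → ℝ) (f : (Fin d → ℝ) → ℝ) :
    (Fin d → ℝ) → ℝ :=
  fun x => -(∑ i, pd i (pd i f) x) + ∑ i, (2 * x i / σ i ^ 2) * pd i f x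

/-- The deterministic integral operator `T_r` (Tn). -/
noncomputable def Tn {d : ℕ} (hd : 0 < d) (p : ℝ≥0∞) (σ : Fin d → ℝ) (g : ℝ → ℝ)
    (r : ℝ) (f : (Fin d → ℝ) → ℝ) (x : Fin d → ℝ) : ℝ :=
  (2 / (r ^ (d + 2) * mmt d hd p g 2 * gaussWeight σ x)) *
    ∫ y : Fin d → ℝ,
      if lpNormR p (x - y) ≤ r then
        g (lpNormR p (x - y) / r) * (f x - f y) * gaussWeight σ y
      else 0

/-- The intermediate operator `T̃_r`. -/
noncomputable def TtildeOp {d : ℕ} (hd : 0 < d) (p : ℝ≥0∞) (σ : Fin d → ℝ)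
    (g : ℝ → ℝ) (r : ℝ) (f : (Fin d → ℝ) → ℝ) (x : Fin d → ℝ) : ℝ :=
  (2 * mmt d hd p g 0 / (mmt d hd p g 2 * r ^ 2)) *
    (∫ y : Fin d → ℝ,
      if lpNormR p (x - y) ≤ r then
        g (lpNormR p (x - y) / r) * (f x - f y) * gaussWeight σ y
      else 0) /
    (∫ y : Fin d → ℝ,
      if lpNormR p (x - y) ≤ r then g (lpNormR p (x - y) / r) * gaussWeight σ y else 0)

/-- The empirical operator `L̃_n`. -/
noncomputable def empOp {d n : ℕ} (hd : 0 < d) (p : ℝ≥0∞) (g gs : ℝ → ℝ) (α r : ℝ)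
    (x : Fin n → Fin d → ℝ) (f : (Fin d → ℝ) → ℝ) (y : Fin d → ℝ) : ℝ :=
  (2 * mmt d hd p g 0 / (mmt d hd p g 2 * r ^ 2)) *
    (∑ j, sigmoid (α * (r ^ 2 - lpNormR p (y - x j) ^ 2)) *
        gs (lpNormR p (y - x j) / r) * (f y - f (x j))) /
    (∑ j, sigmoid (α * (r ^ 2 - lpNormR p (y - x j) ^ 2)) *
        gs (lpNormR p (y - x j) / r))

/-!
The hard kernel is the step function `1(r² - ‖x-y‖² ≥ 0)` times `g*` (since `g = g*` on `[0,1]`),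
and the step function differs from `s(αu)` by exactly `s(-α|u|) = 1 / (1 + e^{α|u|})`;
bounding `g*` by its supremum gives the claim.
-/

lemma lpNormR_nonneg {d : ℕ} (p : ℝ≥0∞) (x : Fin d → ℝ) : 0 ≤ lpNormR p x := by
  unfold lpNormR
  split_ifs
  · exact Real.iSup_nonneg fun i => abs_nonneg _
  · exact Real.rpow_nonneg (Finset.sum_nonneg fun i _ => Real.rpow_nonneg (abs_nonneg _) _) _

lemma one_sub_sigmoid (u : ℝ) : 1 - sigmoid u = sigmoid (-u) := by
  have hexp : Real.exp (-u) * Real.exp u = 1 := by rw [← Real.exp_add, neg_add_cancel, Real.exp_zero]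
  unfold sigmoid
  rw [neg_neg]
  field_simp
  linear_combination hexp

lemma abs_heaviside_sub_sigmoid (α u : ℝ) :
    |(if 0 ≤ u then 1 else 0) - sigmoid (α * u)| = (1 + Real.exp (α * |u|))⁻¹ := by
  have hpos : 0 < sigmoid (α * u) := by unfold sigmoid; positivity
  split_ifs with hu
  · rw [one_sub_sigmoid, abs_of_nonneg hu, sigmoid, neg_neg, abs_of_pos (by positivity)]
  · rw [zero_sub, abs_neg, abs_of_pos hpos, sigmoid, abs_of_neg (not_le.mp hu), mul_neg]

theorem hard_vs_sigmoid_kernel_general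
    (d : ℕ) (p : ℝ≥0∞) (g : ℝ → ℝ) (gs : ℝ → ℝ)
    (hgseq : ∀ y ∈ Set.Icc (0 : ℝ) 1, gs y = g y)
    (hgspos : ∀ y, 0 ≤ y → 0 < gs y)
    (hgsbdd : BddAbove (gs '' Set.Ici 0))
    (α r : ℝ) (hr : 0 < r) (x y : Fin d → ℝ) :
    |(if lpNormR p (x - y) ≤ r then g (lpNormR p (x - y) / r) else 0) -
        sigmoid (α * (r ^ 2 - lpNormR p (x - y) ^ 2)) * gs (lpNormR p (x - y) / r)| ≤
      sSup (gs '' Set.Ici 0) / (1 + Real.exp (α * |r ^ 2 - lpNormR p (x - y) ^ 2|)) := by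
  set t := lpNormR p (x - y)
  have ht : 0 ≤ t := lpNormR_nonneg p (x - y)
  have htr : 0 ≤ t / r := div_nonneg ht hr.le
  have hcut : (if t ≤ r then g (t / r) else 0) =
      (if 0 ≤ r ^ 2 - t ^ 2 then 1 else 0) * gs (t / r) := by
    by_cases h : t ≤ r
    · rw [if_pos h, if_pos (by nlinarith), one_mul, hgseq _ ⟨htr, (div_le_one hr).mpr h⟩]
    · rw [if_neg h, if_neg (by nlinarith), zero_mul]
  calc _ = |(if 0 ≤ r ^ 2 - t ^ 2 then 1 else 0) - sigmoid (α * (r ^ 2 - t ^ 2))| * gs (t / r) := by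
        rw [hcut, ← sub_mul, abs_mul, abs_of_pos (hgspos _ htr)]
    _ = gs (t / r) / (1 + Real.exp (α * |r ^ 2 - t ^ 2|)) := by
        rw [abs_heaviside_sub_sigmoid, inv_mul_eq_div]
    _ ≤ _ := by
        gcongr
        exact le_csSup hgsbdd ⟨t / r, htr, rfl⟩

/-- Lemma `sig2ind`: the hard-threshold kernel and the sigmoid-smoothed
kernel differ by at most `(sup_{t ≥ 0} g*(t)) / (1 + e^{α|r² - ‖x-y‖_p²|})`. -/
theorem hard_vs_sigmoid_kernel
    (d : ℕ) (hd : 0 < d)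
    (p : ℝ≥0∞) (hp : 1 ≤ p)
    (g : ℝ → ℝ) (hg : ContDiffOn ℝ 2 g (Set.Ici 0))
    (c₁ c₂ : ℝ) (hc₁ : 0 < c₁)
    (hgb : ∀ y ∈ Set.Icc (0 : ℝ) 1, c₁ ≤ g y ∧ g y ≤ c₂)
    (gs : ℝ → ℝ) (hgs : ContDiffOn ℝ 2 gs (Set.Ici 0))
    (hgseq : ∀ y ∈ Set.Icc (0 : ℝ) 1, gs y = g y)
    (hgspos : ∀ y, 0 ≤ y → 0 < gs y)
    (hgsbdd : BddAbove (gs '' Set.Ici 0))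
    (α r : ℝ) (hα : 0 < α) (hr : 0 < r) (x y : Fin d → ℝ) :
    |(if lpNormR p (x - y) ≤ r then g (lpNormR p (x - y) / r) else 0) -
        sigmoid (α * (r ^ 2 - lpNormR p (x - y) ^ 2)) * gs (lpNormR p (x - y) / r)| ≤
      sSup (gs '' Set.Ici 0) / (1 + Real.exp (α * |r ^ 2 - lpNormR p (x - y) ^ 2|)) :=
  hard_vs_sigmoid_kernel_general d p g gs hgseq hgspos hgsbdd α r hr x y
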